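/- Let G_κ(t,x) = (1/2)·1_{|x| ≤ κt} for t ≥ 0 (0 for t < 0). For any T > 0 and all (t,x), (t',x') ∈ (0,T] × ℝ, ∫₀^∞ ∫_ℝ (G_κ(t−s, x−y) − G_κ(t'−s, x'−y))² dy ds ≤ C_T (|x'−x| + |t'−t|), where C_T = (max(κ,1)) T / 2. -/

import Mathlib

open Real MeasureTheory

/-!
For fixed `s`, the two kernels are `1/2` times the indicators of the intervals
`[x - κ(t-s), x + κ(t-s)]` and `[x' - κ(t'-s), x' + κ(t'-s)]`, so the inner integral is a quarter
of the length of their symmetric difference. That symmetric difference lies in the union of the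
intervals between corresponding endpoints, of total length at most `2 (|x' - x| + κ |t' - t|)`.
The integrand vanishes for `s > T`, so integrating over `s ∈ (0, T]` gives the factor `T`.
-/

/-- Wave kernel `G_κ(t,x) = (1/2)·1_{|x| ≤ κt}` for `t ≥ 0`, and `0` for `t < 0`. -/
noncomputable def waveKernel (κ t x : ℝ) : ℝ :=
  if 0 ≤ t ∧ |x| ≤ κ * t then 1 / 2 else 0

/-- `T_κ(t,x) = (t − |x|/(2κ))·1_{|x| ≤ 2κt}`. -/
noncomputable def Tker (κ t x : ℝ) : ℝ :=
  if |x| ≤ 2 * κ * t then t - |x| / (2 * κ) else 0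

theorem Set.symmDiff_Icc_subset_uIcc_union_uIcc {α : Type*} [LinearOrder α] (a₁ b₁ a₂ b₂ : α) :
    symmDiff (Set.Icc a₁ b₁) (Set.Icc a₂ b₂) ⊆ Set.uIcc a₁ a₂ ∪ Set.uIcc b₁ b₂ := by
  intro y hy
  simp only [Set.mem_symmDiff, Set.mem_Icc, not_and_or, not_le] at hy
  simp only [Set.mem_union, Set.mem_uIcc]
  rcases hy with ⟨⟨h₁, h₂⟩, h | h⟩ | ⟨⟨h₁, h₂⟩, h | h⟩
  · exact Or.inl (Or.inl ⟨h₁, h.le⟩)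
  · exact Or.inr (Or.inr ⟨h.le, h₂⟩)
  · exact Or.inl (Or.inr ⟨h₁, h.le⟩)
  · exact Or.inr (Or.inl ⟨h.le, h₂⟩)

theorem Real.volume_real_symmDiff_Icc_le (a₁ b₁ a₂ b₂ : ℝ) :
    volume.real (symmDiff (Set.Icc a₁ b₁) (Set.Icc a₂ b₂)) ≤ |a₁ - a₂| + |b₁ - b₂| :=
  calc volume.real (symmDiff (Set.Icc a₁ b₁) (Set.Icc a₂ b₂))
      ≤ volume.real (Set.uIcc a₁ a₂ ∪ Set.uIcc b₁ b₂) :=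
        measureReal_mono (Set.symmDiff_Icc_subset_uIcc_union_uIcc a₁ b₁ a₂ b₂)
          (measure_union_lt_top measure_Icc_lt_top measure_Icc_lt_top).ne
    _ ≤ volume.real (Set.uIcc a₁ a₂) + volume.real (Set.uIcc b₁ b₂) := measureReal_union_le _ _
    _ = |a₁ - a₂| + |b₁ - b₂| := by rw [Real.volume_real_interval, Real.volume_real_interval,
        abs_sub_comm a₂, abs_sub_comm b₂]

theorem Set.sq_indicator_const_sub_indicator_const {α R : Type*} [Ring R] (s t : Set α) (c : R)
    (y : α) :
    (s.indicator (fun _ => c) y - t.indicator (fun _ => c) y) ^ 2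
      = (symmDiff s t).indicator (fun _ => c ^ 2) y := by
  by_cases hs : y ∈ s <;> by_cases ht : y ∈ t <;> simp [hs, ht, Set.mem_symmDiff]

theorem waveKernel_sub_eq_indicator {κ : ℝ} (hκ : 0 < κ) (u x y : ℝ) :
    waveKernel κ u (x - y) = (Set.Icc (x - κ * u) (x + κ * u)).indicator (fun _ => 1 / 2) y := by
  have hmem : y ∈ Set.Icc (x - κ * u) (x + κ * u) ↔ 0 ≤ u ∧ |x - y| ≤ κ * u := by
    rw [Set.mem_Icc, abs_le]
    constructor
    · rintro ⟨h₁, h₂⟩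
      exact ⟨nonneg_of_mul_nonneg_right (by linarith) hκ, by linarith, by linarith⟩
    · rintro ⟨-, h₁, h₂⟩
      exact ⟨by linarith, by linarith⟩
  simp only [waveKernel, Set.indicator_apply, hmem]

theorem waveKernel_of_neg {κ t : ℝ} (ht : t < 0) (x : ℝ) : waveKernel κ t x = 0 :=
  if_neg fun h => ht.not_ge h.1

theorem integral_sq_waveKernel_sub_le {κ : ℝ} (hκ : 0 < κ) (u u' x x' : ℝ) :
    ∫ y, (waveKernel κ u (x - y) - waveKernel κ u' (x' - y)) ^ 2
      ≤ (|x - x'| + κ * |u - u'|) / 2 := by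
  simp only [waveKernel_sub_eq_indicator hκ, Set.sq_indicator_const_sub_indicator_const]
  rw [integral_indicator_const _ (measurableSet_Icc.symmDiff measurableSet_Icc), smul_eq_mul]
  have hsymm := Real.volume_real_symmDiff_Icc_le (x - κ * u) (x + κ * u) (x' - κ * u') (x' + κ * u')
  have hleft : |x - κ * u - (x' - κ * u')| ≤ |x - x'| + κ * |u - u'| := by
    calc |x - κ * u - (x' - κ * u')| = |(x - x') - κ * (u - u')| := by ring_nf
      _ ≤ |x - x'| + |κ * (u - u')| := abs_sub _ _
      _ = |x - x'| + κ * |u - u'| := by rw [abs_mul, abs_of_pos hκ]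
  have hright : |x + κ * u - (x' + κ * u')| ≤ |x - x'| + κ * |u - u'| := by
    calc |x + κ * u - (x' + κ * u')| = |(x - x') + κ * (u - u')| := by ring_nf
      _ ≤ |x - x'| + |κ * (u - u')| := abs_add_le _ _
      _ = |x - x'| + κ * |u - u'| := by rw [abs_mul, abs_of_pos hκ]
  linarith

theorem waveKernel_increment_bound_general (κ T : ℝ) (hκ : 0 < κ)
    (t t' x x' : ℝ) (ht : t ∈ Set.Ioc 0 T) (ht' : t' ∈ Set.Ioc 0 T) :
    ∫ s in Set.Ioi (0:ℝ), ∫ y : ℝ,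
        (waveKernel κ (t - s) (x - y) - waveKernel κ (t' - s) (x' - y)) ^ 2
      ≤ (max κ 1) * T / 2 * (|x' - x| + |t' - t|) := by
  set ψ : ℝ → ℝ := fun s =>
    ∫ y : ℝ, (waveKernel κ (t - s) (x - y) - waveKernel κ (t' - s) (x' - y)) ^ 2
  have hψ_bound : ∀ s, ‖ψ s‖ ≤ max κ 1 / 2 * (|x' - x| + |t' - t|) := by
    intro s
    have h := integral_sq_waveKernel_sub_le hκ (t - s) (t' - s) x x'
    rw [sub_sub_sub_cancel_right, abs_sub_comm x, abs_sub_comm t] at h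
    rw [Real.norm_of_nonneg (integral_nonneg fun _ => sq_nonneg _)]
    nlinarith [le_max_left κ 1, le_max_right κ 1, abs_nonneg (x' - x), abs_nonneg (t' - t)]
  have hψ_zero : ∀ s ∈ Set.Ioi (0:ℝ) \ Set.Ioc 0 T, ψ s = 0 := by
    rintro s ⟨hs₀, hsT⟩
    have hTs : T < s := lt_of_not_ge fun h => hsT ⟨hs₀, h⟩
    simp [ψ, waveKernel_of_neg (sub_neg.2 (ht.2.trans_lt hTs)),
      waveKernel_of_neg (sub_neg.2 (ht'.2.trans_lt hTs))]
  calc ∫ s in Set.Ioi (0:ℝ), ψ s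
      = ∫ s in Set.Ioc 0 T, ψ s :=
        setIntegral_eq_of_subset_of_forall_sdiff_eq_zero measurableSet_Ioi Set.Ioc_subset_Ioi_self
          hψ_zero
    _ ≤ ‖∫ s in Set.Ioc 0 T, ψ s‖ := le_norm_self _
    _ ≤ max κ 1 / 2 * (|x' - x| + |t' - t|) * volume.real (Set.Ioc 0 T) :=
        norm_setIntegral_le_of_norm_le_const measure_Ioc_lt_top fun s _ => hψ_bound s
    _ = max κ 1 * T / 2 * (|x' - x| + |t' - t|) := by
        rw [Real.volume_real_Ioc_of_le (ht.1.le.trans ht.2)]; ring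

theorem waveKernel_increment_bound (κ T : ℝ) (hκ : 0 < κ) (hT : 0 < T)
    (t t' x x' : ℝ) (ht : t ∈ Set.Ioc 0 T) (ht' : t' ∈ Set.Ioc 0 T) :
    ∫ s in Set.Ioi (0:ℝ), ∫ y : ℝ,
        (waveKernel κ (t - s) (x - y) - waveKernel κ (t' - s) (x' - y)) ^ 2
      ≤ (max κ 1) * T / 2 * (|x' - x| + |t' - t|) :=
  waveKernel_increment_bound_general κ T hκ t t' x x' ht ht'
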